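/- arXiv:2511.06235 — 3 statements merged into one kernel-verified Lean document; each statement's English description precedes it below -/
import Mathlib

section
/- Let q > 0 and p ∈ ℝ. Define L₀(γ) = -p²γ/(2(1+qγ)) + (1/2)log(1+qγ) on [0,∞). If q - p² ≥ 0, then γ = 0 is the unique global minimizer of L₀ on [0,∞); if q - p² < 0, then γ* = (p² - q)/q² is the unique global minimizer of L₀ on [0,∞). -/
/-!
Substituting `t = 1 + qγ` and `a = p² / q` turns the objective into
`L₀ γ = (log t + a / t - a) / 2`, so it suffices to minimise `g t = log t + a / t` over `t ≥ 1`.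
Both cases then come from the strict inequality `1 - u⁻¹ < log u` for `u ≠ 1`:
with `u = t / a` it shows that `t = a` is the strict minimiser of `g` when `a > 1`, and with
`u = t` that `t = 1` is the strict minimiser on `[1, ∞)` when `a ≤ 1`.
-/

open Real

lemma one_sub_inv_lt_log_of_ne_one {u : ℝ} (hu : 0 < u) (hu1 : u ≠ 1) : 1 - u⁻¹ < log u := by
  have h := log_lt_sub_one_of_pos (inv_pos.mpr hu) (inv_ne_one.mpr hu1)
  rw [log_inv] at h
  linarith

noncomputable def sblReduced (a t : ℝ) : ℝ := log t + a / t

lemma sblObjective_eq_sblReduced {q : ℝ} (p γ : ℝ) (hq : q ≠ 0) (ht : 1 + q * γ ≠ 0) :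
    -(p ^ 2 * γ) / (2 * (1 + q * γ)) + (1 / 2) * log (1 + q * γ)
      = (sblReduced (p ^ 2 / q) (1 + q * γ) - p ^ 2 / q) / 2 := by
  have hγ : p ^ 2 * γ = p ^ 2 / q * (1 + q * γ - 1) := by field_simp; ring
  rw [hγ, sblReduced]
  field_simp
  ring

lemma sblReduced_self_lt {a t : ℝ} (ha : 0 < a) (ht : 0 < t) (hta : t ≠ a) :
    sblReduced a a < sblReduced a t := by
  have key := one_sub_inv_lt_log_of_ne_one (div_pos ht ha) (div_ne_one_of_ne hta)
  rw [log_div ht.ne' ha.ne', inv_div] at key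
  unfold sblReduced
  rw [div_self ha.ne']
  linarith

lemma sblReduced_one_lt {a t : ℝ} (ha : a ≤ 1) (ht : 1 < t) :
    sblReduced a 1 < sblReduced a t := by
  have ht0 : 0 < t := one_pos.trans ht
  have key := one_sub_inv_lt_log_of_ne_one ht0 ht.ne'
  have hinv : t⁻¹ < 1 := inv_lt_one_of_one_lt₀ ht
  unfold sblReduced
  rw [log_one, div_one, div_eq_mul_inv]
  -- the gap is `(log t - (1 - t⁻¹)) + (1 - a) * (1 - t⁻¹)`
  nlinarith [mul_nonneg (sub_nonneg.mpr ha) (sub_nonneg.mpr hinv.le)]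

theorem stmt_4 (q p : ℝ) (hq : 0 < q) (L₀ : ℝ → ℝ)
    (hL : ∀ γ : ℝ, L₀ γ = -(p^2 * γ) / (2 * (1 + q * γ)) + (1/2) * Real.log (1 + q * γ)) :
    (0 ≤ q - p^2 → ∀ γ : ℝ, 0 ≤ γ → γ ≠ 0 → L₀ 0 < L₀ γ) ∧
    (q - p^2 < 0 → ∀ γ : ℝ, 0 ≤ γ → γ ≠ (p^2 - q) / q^2 →
      L₀ ((p^2 - q) / q^2) < L₀ γ) := by
  have hL' : ∀ γ, 0 ≤ γ → L₀ γ = (sblReduced (p ^ 2 / q) (1 + q * γ) - p ^ 2 / q) / 2 :=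
    fun γ hγ ↦ by rw [hL, sblObjective_eq_sblReduced p γ hq.ne' (by positivity)]
  constructor
  · intro hle γ hγ hne
    have ha : p ^ 2 / q ≤ 1 := (div_le_one hq).mpr (by linarith)
    have ht : 1 < 1 + q * γ := by
      have := mul_pos hq (lt_of_le_of_ne hγ (Ne.symm hne))
      linarith
    have := sblReduced_one_lt ha ht
    rw [hL' 0 le_rfl, hL' γ hγ, mul_zero, add_zero]
    linarith
  · intro hlt γ hγ hne
    have ha : 0 < p ^ 2 / q := div_pos (by nlinarith) hq
    have hstar : 1 + q * ((p ^ 2 - q) / q ^ 2) = p ^ 2 / q := by field_simp; ring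
    have hstar0 : 0 ≤ (p ^ 2 - q) / q ^ 2 := div_nonneg (by linarith) (sq_nonneg q)
    have hta : 1 + q * γ ≠ p ^ 2 / q := by
      rw [← hstar]
      intro h
      exact hne (mul_left_cancel₀ hq.ne' (add_left_cancel h))
    have := sblReduced_self_lt ha (by positivity) hta
    rw [hL' _ hstar0, hL' γ hγ, hstar]
    linarith
end

section
/- Let q > 0, p ∈ ℝ, β > 0, and define L(γ) = -p²γ/(2(1+qγ)) + (1/2)log(1+qγ) + γ/β on [0,∞) (half-Laplace hyperprior). If q - p² ≥ -2/β, then L is nondecreasing on [0,∞) and γ = 0 is a global minimizer. If q - p² < -2/β, then the unique positive stationary point is γ* = (-(4+βq) + √(β²q² + 8βp²))/(4q), and it is the global minimizer of L on [0,∞). -/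
lemma hasDerivAt_L (q p β : ℝ) (hβ : β ≠ 0) {γ : ℝ} (h : 0 < 1 + q * γ) :
    HasDerivAt (fun x => -(p^2 * x) / (2 * (1 + q * x)) + (1/2) * Real.log (1 + q * x) + x / β)
      ((2*q^2*γ^2 + (4*q + β*q^2)*γ + 2 + β*(q - p^2)) / (2*β*(1+q*γ)^2)) γ := by
  have h1 : HasDerivAt (fun x : ℝ => 1 + q * x) q γ := by
    simpa using ((hasDerivAt_id γ).const_mul q).const_add 1
  have h2 : HasDerivAt (fun x : ℝ => 2 * (1 + q * x)) (2*q) γ := h1.const_mul 2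
  have hnum : HasDerivAt (fun x : ℝ => -(p^2 * x)) (-(p^2)) γ := by
    simpa using ((hasDerivAt_id γ).const_mul (p^2)).fun_neg
  have hden : (2 * (1 + q * γ)) ≠ 0 := by positivity
  have hdiv := hnum.fun_div h2 hden
  have hlog := (h1.log h.ne').const_mul (1/2 : ℝ)
  have hlin : HasDerivAt (fun x : ℝ => x / β) (1/β) γ := by
    simpa using (hasDerivAt_id γ).div_const β
  have := (hdiv.fun_add hlog).fun_add hlin
  refine this.congr_deriv ?_
  field_simp
  ring

theorem stmt_5 (q p β : ℝ) (hq : 0 < q) (hβ : 0 < β) (L : ℝ → ℝ)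
    (hL : ∀ γ : ℝ, L γ = -(p^2 * γ) / (2 * (1 + q * γ)) + (1/2) * Real.log (1 + q * γ) + γ / β) :
    (q - p^2 ≥ -2 / β →
      MonotoneOn L (Set.Ici 0) ∧ ∀ γ : ℝ, 0 ≤ γ → L 0 ≤ L γ) ∧
    (q - p^2 < -2 / β →
      0 < (-(4 + β * q) + Real.sqrt (β^2 * q^2 + 8 * β * p^2)) / (4 * q) ∧
      (∀ γ : ℝ, 0 < γ →
        (deriv L γ = 0 ↔ γ = (-(4 + β * q) + Real.sqrt (β^2 * q^2 + 8 * β * p^2)) / (4 * q))) ∧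
      (∀ γ : ℝ, 0 ≤ γ →
        L ((-(4 + β * q) + Real.sqrt (β^2 * q^2 + 8 * β * p^2)) / (4 * q)) ≤ L γ)) := by
  have hLf : L = fun x => -(p^2 * x) / (2 * (1 + q * x)) + (1/2) * Real.log (1 + q * x) + x / β :=
    funext hL
  have hder : ∀ γ : ℝ, 0 < 1 + q * γ →
      HasDerivAt L ((2*q^2*γ^2 + (4*q + β*q^2)*γ + 2 + β*(q - p^2)) / (2*β*(1+q*γ)^2)) γ := by
    intro γ h
    rw [hLf]; exact hasDerivAt_L q p β hβ.ne' h
  have hpos : ∀ γ : ℝ, 0 ≤ γ → 0 < 1 + q * γ := fun γ hγ => by positivity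
  have hcont : ContinuousOn L (Set.Ici 0) := fun γ hγ =>
    ((hder γ (hpos γ hγ)).continuousAt).continuousWithinAt
  have hderiv : ∀ γ : ℝ, 0 < 1 + q * γ →
      deriv L γ = (2*q^2*γ^2 + (4*q + β*q^2)*γ + 2 + β*(q - p^2)) / (2*β*(1+q*γ)^2) :=
    fun γ h => (hder γ h).deriv
  constructor
  · intro hcase
    have hc0 : 0 ≤ 2 + β*(q - p^2) := by
      have : -2/β ≤ q - p^2 := hcase
      nlinarith [mul_le_mul_of_nonneg_left this hβ.le, mul_div_cancel₀ (-2 : ℝ) hβ.ne']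
    have hmono : MonotoneOn L (Set.Ici 0) := by
      apply monotoneOn_of_deriv_nonneg (convex_Ici 0) hcont
      · intro γ hγ
        rw [interior_Ici] at hγ
        exact (hder γ (hpos γ (le_of_lt hγ))).differentiableAt.differentiableWithinAt
      · intro γ hγ
        rw [interior_Ici] at hγ
        have hγ' : (0:ℝ) < γ := hγ
        rw [hderiv γ (hpos γ hγ'.le)]
        apply div_nonneg _ (by positivity)
        nlinarith [sq_nonneg γ, mul_pos hq hγ', mul_pos (mul_pos hq hq) (mul_pos hγ' hγ')]
    exact ⟨hmono, fun γ hγ => hmono Set.self_mem_Ici hγ hγ⟩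
  · intro hcase
    have hc0 : 2 + β*(q - p^2) < 0 := by
      have h1 : β * (q - p^2) < β * (-2/β) := by
        exact mul_lt_mul_of_pos_left hcase hβ
      rw [mul_div_cancel₀ (-2 : ℝ) hβ.ne'] at h1
      linarith
    set D := β^2 * q^2 + 8 * β * p^2 with hDdef
    have hDnn : 0 ≤ D := by positivity
    have hsq : Real.sqrt D ^ 2 = D := Real.sq_sqrt hDnn
    have hsnn : 0 ≤ Real.sqrt D := Real.sqrt_nonneg D
    set g := (-(4 + β * q) + Real.sqrt D) / (4 * q) with hgdef
    set s := (-(4 + β * q) - Real.sqrt D) / (4 * q) with hsdef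
    have hroot : Real.sqrt D > 4 + β * q := by
      have h4 : (0:ℝ) ≤ 4 + β * q := by positivity
      have : (4 + β * q)^2 < D := by nlinarith
      nlinarith [hsq, hsnn]
    have hgpos : 0 < g := by
      rw [hgdef]
      apply div_pos (by linarith) (by linarith)
    have hsneg : s < 0 := by
      rw [hsdef]
      apply div_neg_of_neg_of_pos _ (by linarith)
      nlinarith
    have hq4 : (4 * q) ≠ 0 := by positivity
    -- factorization of the quadratic
    have hfact : ∀ γ : ℝ, 2*q^2*γ^2 + (4*q + β*q^2)*γ + 2 + β*(q - p^2)
        = 2*q^2 * (γ - g) * (γ - s) := by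
      intro γ
      rw [hgdef, hsdef]
      field_simp
      nlinarith [hsq, sq_nonneg γ]
    refine ⟨hgpos, ?_, ?_⟩
    · intro γ hγ
      rw [hderiv γ (hpos γ hγ.le)]
      rw [div_eq_zero_iff]
      have hne : (2*β*(1+q*γ)^2) ≠ 0 := by
        have := hpos γ hγ.le; positivity
      constructor
      · rintro (h | h)
        · rw [hfact γ] at h
          rcases mul_eq_zero.mp h with h' | h'
          · rcases mul_eq_zero.mp h' with h'' | h''
            · exact absurd h'' (by positivity)
            · linarith [sub_eq_zero.mp h'']
          · exfalso; have := sub_eq_zero.mp h'; linarith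
        · exact absurd h hne
      · intro h
        left
        rw [hfact γ, h]
        ring
    · -- global minimum
      have hantit : AntitoneOn L (Set.Icc 0 g) := by
        apply antitoneOn_of_deriv_nonpos (convex_Icc 0 g)
          (hcont.mono (fun x hx => hx.1))
        · intro γ hγ
          rw [interior_Icc] at hγ
          exact (hder γ (hpos γ hγ.1.le)).differentiableAt.differentiableWithinAt
        · intro γ hγ
          rw [interior_Icc] at hγ
          rw [hderiv γ (hpos γ hγ.1.le)]
          apply div_nonpos_of_nonpos_of_nonneg _ (by have := hpos γ hγ.1.le; positivity)
          rw [hfact γ]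
          have h1 : γ - g ≤ 0 := by linarith [hγ.2]
          have h2 : 0 ≤ γ - s := by linarith [hγ.1]
          have hq2 : (0:ℝ) ≤ 2 * q^2 := by positivity
          nlinarith [mul_nonpos_of_nonpos_of_nonneg h1 h2, hq2]
      have hmono2 : MonotoneOn L (Set.Ici g) := by
        apply monotoneOn_of_deriv_nonneg (convex_Ici g)
          (hcont.mono (fun x hx => le_trans hgpos.le hx))
        · intro γ hγ
          rw [interior_Ici] at hγ
          have : (0:ℝ) < γ := lt_trans hgpos hγ
          exact (hder γ (hpos γ this.le)).differentiableAt.differentiableWithinAt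
        · intro γ hγ
          rw [interior_Ici] at hγ
          have hγ' : g < γ := hγ
          have hγ0 : (0:ℝ) < γ := lt_trans hgpos hγ'
          rw [hderiv γ (hpos γ hγ0.le)]
          apply div_nonneg _ (by have := hpos γ hγ0.le; positivity)
          rw [hfact γ]
          have h1 : 0 ≤ γ - g := by linarith
          have h2 : 0 ≤ γ - s := by linarith
          positivity
      intro γ hγ
      rcases le_total γ g with h | h
      · exact hantit ⟨hγ, h⟩ ⟨hgpos.le, le_refl g⟩ h
      · exact hmono2 (Set.self_mem_Ici) h h
end

section
/- Let 0 < ζ < 1 and β > 0, and define H(γ) = (γ/β)^ζ on [0,∞). Then for any q > 0 and p ∈ ℝ, the function L(γ) = -p²γ/(2(1+qγ)) + (1/2)log(1+qγ) + H(γ) satisfies: there exists ε > 0 such that L(γ) > L(0) for all γ ∈ (0, ε); i.e., γ = 0 is always a strict local minimizer of L on [0,∞). -/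
open Filter Topology

/-!
Near `0` the concave power `(γ / β) ^ ζ` dominates every linear function, since
`γ ^ ζ / γ = γ ^ (ζ - 1) → ∞` as `γ → 0⁺`, while the smooth part of `L` is bounded below by the
linear function `-p² γ / 2`. Hence `L γ > 0 = L 0` for small `γ > 0`.
-/

theorem eventually_mul_lt_rpow_nhdsGT_zero {ζ : ℝ} (hζ : ζ < 1) (c : ℝ) :
    ∀ᶠ x in 𝓝[>] 0, c * x < x ^ ζ := by
  have hlarge : ∀ᶠ x in 𝓝[>] (0 : ℝ), c < x ^ (ζ - 1) :=
    (tendsto_rpow_neg_nhdsGT_zero (sub_neg.2 hζ)).eventually_gt_atTop c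
  filter_upwards [self_mem_nhdsWithin, hlarge] with x (hx : 0 < x) hcx
  calc c * x < x ^ (ζ - 1) * x := mul_lt_mul_of_pos_right hcx hx
    _ = x ^ ζ := by rw [← Real.rpow_add_one hx.ne', sub_add_cancel]

theorem neg_mul_div_two_le_add_half_log {p q γ : ℝ} (hq : 0 ≤ q) (hγ : 0 ≤ γ) :
    -(p ^ 2 * γ) / 2 ≤ -(p ^ 2 * γ) / (2 * (1 + q * γ)) + 1 / 2 * Real.log (1 + q * γ) := by
  have hqγ : 0 ≤ q * γ := mul_nonneg hq hγ
  have hfrac : p ^ 2 * γ / (2 * (1 + q * γ)) ≤ p ^ 2 * γ / 2 := by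
    gcongr
    linarith
  have hlog : 0 ≤ Real.log (1 + q * γ) := Real.log_nonneg (by linarith)
  rw [neg_div, neg_div]
  linarith

theorem stmt_15 (ζ β q p : ℝ) (hζ : 0 < ζ) (hζ1 : ζ < 1) (hβ : 0 < β)
    (hq : 0 < q) (H L : ℝ → ℝ)
    (hH : ∀ γ : ℝ, H γ = (γ / β) ^ ζ)
    (hL : ∀ γ : ℝ, L γ = -(p^2 * γ) / (2 * (1 + q * γ)) + (1/2) * Real.log (1 + q * γ) + H γ) :
    ∃ ε > 0, ∀ γ ∈ Set.Ioo (0:ℝ) ε, L 0 < L γ := by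
  have hL0 : L 0 = 0 := by simp [hL, hH, Real.zero_rpow hζ.ne']
  have hβζ : 0 < β ^ ζ := Real.rpow_pos_of_pos hβ ζ
  have hev : ∀ᶠ γ in 𝓝[>] 0, L 0 < L γ := by
    filter_upwards [self_mem_nhdsWithin,
      eventually_mul_lt_rpow_nhdsGT_zero hζ1 (p ^ 2 / 2 * β ^ ζ)] with γ (hγ : 0 < γ) hlin
    have hpow : p ^ 2 * γ / 2 < (γ / β) ^ ζ := by
      rw [Real.div_rpow hγ.le hβ.le, lt_div_iff₀ hβζ]
      linarith
    have hsmooth := neg_mul_div_two_le_add_half_log (p := p) hq.le hγ.le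
    rw [hL0, hL, hH]
    linarith [neg_div 2 (p ^ 2 * γ)]
  exact mem_nhdsGT_iff_exists_Ioo_subset.1 hev
end
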